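/- arXiv:1206.1649 — 6 statements merged into one kernel-verified Lean document; each statement's English description precedes it below -/
import Mathlib

section
/- Let G be a group, r a positive integer, and ρ : G → GL(r, ℂ) a group homomorphism whose kernel is a finite group. Then G is finite if and only if there exists a positive integer d such that every element of the image ρ(G) has finite order at most d. -/
/-!
If every element of `ρ(G)` has order at most `d`, then `ρ(G)` has exponent dividing `d!`, so the
eigenvalues of its elements are roots of unity and its traces take only finitely many values.
An element of finite order with trace `r` is the identity: its eigenvalues have modulus one and
sum to `r`, so they all equal one, and a unipotent matrix of finite order is trivial.
Burnside's argument then shows that `g ↦ (tr (g m))ₘ`, for `m` running over a basis of the span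
of `ρ(G)`, is injective on `ρ(G)` with finitely many values, so `ρ(G)` is finite, and so is `G`
because the kernel is finite.
-/

open Polynomial Matrix

theorem spectrum.pow_eq_one_of_mem {𝕜 A : Type*} [Field 𝕜] [Ring A] [Algebra 𝕜 A] {a : A}
    {N : ℕ} (ha : a ^ N = 1) {μ : 𝕜} (hμ : μ ∈ spectrum 𝕜 a) : μ ^ N = 1 := by
  rcases subsingleton_or_nontrivial A with _ | _
  · simp [spectrum.of_subsingleton] at hμ
  · simpa [ha] using spectrum.pow_mem_pow a N hμ

theorem Complex.re_lt_one_of_norm_le_one {z : ℂ} (hz : ‖z‖ ≤ 1) (hne : z ≠ 1) : z.re < 1 := by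
  refine (z.re_le_norm.trans hz).lt_of_ne fun hre ↦ hne ?_
  have hnorm : |z.re| = ‖z‖ := by
    rw [hre, abs_one]
    exact le_antisymm (hre ▸ z.re_le_norm) hz
  exact Complex.ext hre (Complex.abs_re_eq_norm.mp hnorm)

theorem Multiset.eq_one_of_norm_le_one_of_sum_eq_card {s : Multiset ℂ}
    (hs : ∀ z ∈ s, ‖z‖ ≤ 1) (hsum : s.sum = Multiset.card s) : ∀ z ∈ s, z = 1 := by
  by_contra! ⟨z, hz, hne⟩
  have hlt : (s.map Complex.re).sum < (s.map fun _ ↦ (1 : ℝ)).sum :=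
    Multiset.sum_lt_sum (fun w hw ↦ w.re_le_norm.trans (hs w hw))
      ⟨z, hz, Complex.re_lt_one_of_norm_le_one (hs z hz) hne⟩
  have hre : (s.map Complex.re).sum = (Multiset.card s : ℝ) := by
    rw [← Complex.coe_reAddGroupHom, ← map_multiset_sum, hsum]
    simp
  simp [hre] at hlt

theorem Polynomial.Splits.eq_X_sub_C_pow_of_forall_mem_roots {K : Type*} [Field K] {f : K[X]}
    (hf : f.Splits) (hm : f.Monic) {a : K} (h : ∀ x ∈ f.roots, x = a) :
    f = (X - C a) ^ f.natDegree := by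
  rw [hf.natDegree_eq_card_roots]
  conv_lhs => rw [hf.eq_prod_roots_of_monic hm, Multiset.eq_replicate_card.mpr h]
  simp

theorem eq_one_of_pow_eq_one_of_isNilpotent_sub_one {K A : Type*} [Field K] [Ring A]
    [Algebra K A] {a : A} {N : ℕ} (hN : (N : K) ≠ 0) (ha : a ^ N = 1)
    (hnil : IsNilpotent (a - 1)) : a = 1 := by
  obtain ⟨k, hk⟩ := hnil
  have hsep : (X ^ N - C 1 : K[X]).Separable := separable_X_pow_sub_C 1 hN one_ne_zero
  have hdvd_X_pow : minpoly K a ∣ X ^ N - C 1 := minpoly.dvd K a (by simp [ha])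
  have hdvd_pow : minpoly K a ∣ (X - C 1) ^ k := minpoly.dvd K a (by simp [hk])
  have hdvd : minpoly K a ∣ X - C 1 :=
    (hsep.of_dvd hdvd_X_pow).squarefree.isRadical k _ hdvd_pow
  simpa [sub_eq_zero] using minpoly.dvd_iff.mp hdvd

namespace Matrix

variable {n : Type*} [Fintype n] [DecidableEq n]

theorem isNilpotent_sub_algebraMap_of_forall_mem_roots_charpoly {K : Type*} [Field K]
    [IsAlgClosed K] {A : Matrix n n K} {μ : K} (h : ∀ x ∈ A.charpoly.roots, x = μ) :
    IsNilpotent (A - algebraMap K (Matrix n n K) μ) := by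
  refine ⟨Fintype.card n, ?_⟩
  have := aeval_self_charpoly A
  rwa [(IsAlgClosed.splits _).eq_X_sub_C_pow_of_forall_mem_roots A.charpoly_monic h,
    charpoly_natDegree_eq_dim, map_pow, map_sub, aeval_X, aeval_C] at this

theorem forall_mem_roots_charpoly_eq_one_of_trace_eq_card {A : Matrix n n ℂ} {N : ℕ}
    (hN : N ≠ 0) (hA : A ^ N = 1) (htr : A.trace = Fintype.card n) :
    ∀ μ ∈ A.charpoly.roots, μ = 1 := by
  refine Multiset.eq_one_of_norm_le_one_of_sum_eq_card (fun μ hμ ↦ ?_) ?_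
  · have hspec : μ ∈ spectrum ℂ A :=
      mem_spectrum_iff_isRoot_charpoly.mpr (isRoot_of_mem_roots hμ)
    exact (Complex.norm_eq_one_of_pow_eq_one (spectrum.pow_eq_one_of_mem hA hspec) hN).le
  · rw [← trace_eq_sum_roots_charpoly, htr, ← (IsAlgClosed.splits _).natDegree_eq_card_roots,
      charpoly_natDegree_eq_dim]

theorem eq_one_of_pow_eq_one_of_trace_eq_card {A : Matrix n n ℂ} {N : ℕ} (hN : N ≠ 0)
    (hA : A ^ N = 1) (htr : A.trace = Fintype.card n) : A = 1 := by
  refine eq_one_of_pow_eq_one_of_isNilpotent_sub_one (K := ℂ) (Nat.cast_ne_zero.mpr hN) hA ?_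
  simpa using isNilpotent_sub_algebraMap_of_forall_mem_roots_charpoly
    (forall_mem_roots_charpoly_eq_one_of_trace_eq_card hN hA htr)

theorem finite_trace_image_setOf_pow_eq_one {K : Type*} [Field K] [IsAlgClosed K] {N : ℕ}
    (hN : N ≠ 0) : (trace '' {A : Matrix n n K | A ^ N = 1}).Finite := by
  classical
  let sumSym : Sym K (Fintype.card n) → K := fun m ↦ (m : Multiset K).sum
  refine (((nthRootsFinset N (1 : K)).sym (Fintype.card n)).image sumSym).finite_toSet.subset ?_
  rintro _ ⟨A, hA, rfl⟩
  have hcard : Multiset.card A.charpoly.roots = Fintype.card n := by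
    rw [← (IsAlgClosed.splits _).natDegree_eq_card_roots, charpoly_natDegree_eq_dim]
  rw [trace_eq_sum_roots_charpoly]
  refine Finset.mem_image_of_mem sumSym (a := ⟨_, hcard⟩)
    (Finset.mem_sym_iff.mpr fun μ hμ ↦ ?_)
  rw [mem_nthRootsFinset (Nat.pos_of_ne_zero hN)]
  exact spectrum.pow_eq_one_of_mem hA
    (mem_spectrum_iff_isRoot_charpoly.mpr (isRoot_of_mem_roots hμ))

end Matrix

namespace Matrix.GeneralLinearGroup

variable {n : Type*} [Fintype n] [DecidableEq n]

theorem finite_of_finite_trace_image {K : Type*} [Field K]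
    (H : Subgroup (GeneralLinearGroup n K))
    (htrace : ((fun g : GeneralLinearGroup n K ↦ trace (g : Matrix n n K)) '' H).Finite)
    (hone : ∀ g ∈ H, trace (g : Matrix n n K) = Fintype.card n → g = 1) : Finite H := by
  obtain ⟨t, htH, hspan, hli⟩ := exists_linearIndependent K
    ((fun g : GeneralLinearGroup n K ↦ (g : Matrix n n K)) '' H)
  have : Finite t := hli.setFinite.to_subtype
  let traceMul : GeneralLinearGroup n K → t → K :=
    fun g m ↦ trace ((g : Matrix n n K) * (m : Matrix n n K))
  have hmaps : Set.MapsTo traceMul H (Set.univ.pi fun _ ↦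
      (fun g : GeneralLinearGroup n K ↦ trace (g : Matrix n n K)) '' H) := by
    intro g hg m _
    obtain ⟨h, hh, hm⟩ := htH m.2
    exact ⟨g * h, H.mul_mem hg hh, by simp [traceMul, ← hm]⟩
  -- `trace (g * ·)` is linear, so its values on `t` determine `trace (g * h⁻¹)`.
  have hinj : Set.InjOn traceMul H := by
    intro g hg h hh hgh
    have heq : Set.EqOn (traceLinearMap n K K ∘ₗ LinearMap.mulLeft K (g : Matrix n n K))
        (traceLinearMap n K K ∘ₗ LinearMap.mulLeft K (h : Matrix n n K)) (Submodule.span K t) :=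
      LinearMap.eqOn_span' fun m hm ↦ congrFun hgh ⟨m, hm⟩
    have hinv : ((h⁻¹ : GeneralLinearGroup n K) : Matrix n n K) ∈ Submodule.span K t :=
      hspan ▸ Submodule.subset_span ⟨h⁻¹, H.inv_mem hh, rfl⟩
    have htr : trace ((g * h⁻¹ : GeneralLinearGroup n K) : Matrix n n K) = Fintype.card n := by
      simpa using heq hinv
    exact mul_inv_eq_one.mp (hone _ (H.mul_mem hg (H.inv_mem hh)) htr)
  exact ((Set.Finite.pi fun _ ↦ htrace).subset hmaps.image_subset
    |>.of_finite_image hinj).to_subtype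

theorem finite_of_pow_eq_one (H : Subgroup (GeneralLinearGroup n ℂ)) {N : ℕ} (hN : N ≠ 0)
    (hH : ∀ g ∈ H, g ^ N = 1) : Finite H := by
  have hpow : ∀ g ∈ H, (g : Matrix n n ℂ) ^ N = 1 := fun g hg ↦ by
    rw [← Units.val_pow_eq_pow_val, hH g hg, Units.val_one]
  refine finite_of_finite_trace_image H
    ((finite_trace_image_setOf_pow_eq_one (n := n) hN).subset ?_)
    fun g hg htr ↦ Units.ext (eq_one_of_pow_eq_one_of_trace_eq_card hN (hpow g hg) htr)
  rintro _ ⟨g, hg, rfl⟩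
  exact ⟨g, hpow g hg, rfl⟩

end Matrix.GeneralLinearGroup

theorem finite_iff_image_bounded_exponent_general (G : Type*) [Group G] (r : ℕ)
    (ρ : G →* Matrix.GeneralLinearGroup (Fin r) ℂ)
    (hker : (ρ.ker : Set G).Finite) :
    Finite G ↔ ∃ d : ℕ, 0 < d ∧ ∀ g : G, IsOfFinOrder (ρ g) ∧ orderOf (ρ g) ≤ d := by
  constructor
  · intro hG
    refine ⟨Nat.card G, Nat.card_pos, fun g ↦ ⟨ρ.isOfFinOrder (isOfFinOrder_of_finite g), ?_⟩⟩
    exact Nat.le_of_dvd Nat.card_pos ((orderOf_map_dvd ρ g).trans (orderOf_dvd_natCard g))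
  · rintro ⟨d, -, hρ⟩
    have hpow : ∀ x ∈ ρ.range, x ^ d.factorial = 1 := by
      rintro _ ⟨g, rfl⟩
      exact orderOf_dvd_iff_pow_eq_one.mp (Nat.dvd_factorial (hρ g).1.orderOf_pos (hρ g).2)
    rw [ρ.finite_iff_finite_ker_range]
    exact ⟨hker.to_subtype,
      Matrix.GeneralLinearGroup.finite_of_pow_eq_one _ (Nat.factorial_ne_zero d) hpow⟩

/-- Let `ρ : G → GL(r, ℂ)` be a group homomorphism with finite kernel.
Then `G` is finite if and only if there is a positive integer `d` such that
every element of the image of `ρ` has finite order at most `d`. -/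
theorem finite_iff_image_bounded_exponent (G : Type*) [Group G] (r : ℕ) (hr : 0 < r)
    (ρ : G →* Matrix.GeneralLinearGroup (Fin r) ℂ)
    (hker : (ρ.ker : Set G).Finite) :
    Finite G ↔ ∃ d : ℕ, 0 < d ∧ ∀ g : G, IsOfFinOrder (ρ g) ∧ orderOf (ρ g) ≤ d :=
  finite_iff_image_bounded_exponent_general G r ρ hker
end

section
/- Let C ⊆ ℝ² be a strict closed convex cone with nonempty interior and let g ∈ GL(2,ℤ) preserve C. Then there exist vectors x₁, x₂ ∈ C lying on the frontier of C, linearly independent over ℝ, and real numbers α > 0 and β > 0 with α·β = 1, such that g²·x₁ = α·x₁ and g²·x₂ = β·x₂. -/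
/-!
Slicing the cone by a line `u + ℝ w` through an interior point `u`, in a direction with
`w ∉ C` and `-w ∉ C` (such a `w` exists because `ℝ² \ {0}` is connected), gives a segment whose
endpoints `x₁, x₂` form a basis in which `C` is the nonnegative quadrant. The nonzero frontier
points of `C` are then the positive multiples of `x₁` and `x₂`, so a linear automorphism
preserving `C` permutes these two rays and its square fixes each of them: `x₁, x₂` are
eigenvectors of `g²` with positive eigenvalues, whose product is `det g² = (det g)² = 1`.
-/

open Set Filter Topology

section ConeInVectorSpace

variable {E : Type*} [AddCommGroup E] [Module ℝ E] {C : Set E}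

theorem Convex.add_mem_of_smul_mem (hconv : Convex ℝ C)
    (hcone : ∀ v ∈ C, ∀ t : ℝ, 0 ≤ t → t • v ∈ C) {v w : E} (hv : v ∈ C) (hw : w ∈ C) :
    v + w ∈ C := by
  have hmid := hconv hv hw (by norm_num : (0 : ℝ) ≤ 1 / 2) (by norm_num : (0 : ℝ) ≤ 1 / 2)
    (by norm_num)
  convert hcone _ hmid 2 (by norm_num) using 1
  module

theorem eq_zero_of_smul_add_smul_mem_of_nonpos (hconv : Convex ℝ C)
    (hcone : ∀ v ∈ C, ∀ t : ℝ, 0 ≤ t → t • v ∈ C) (hstrict : ∀ v, v ∈ C → -v ∈ C → v = 0)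
    {u w : E} (hu : u ∈ C) (hu0 : u ≠ 0) (hw : w ∉ C) (hw' : -w ∉ C) {s r : ℝ}
    (hmem : s • u + r • w ∈ C) (hs : s ≤ 0) : s = 0 ∧ r = 0 := by
  have hrw : r • w ∈ C := by
    convert hconv.add_mem_of_smul_mem hcone hmem (hcone u hu (-s) (by linarith)) using 1
    module
  have hr : r = 0 := by
    rcases lt_trichotomy r 0 with hr | hr | hr
    · refine absurd ?_ hw'
      convert hcone _ hrw (-r)⁻¹ (inv_nonneg.2 (by linarith)) using 1
      rw [smul_smul, inv_neg, neg_mul, inv_mul_cancel₀ hr.ne, neg_smul, one_smul]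
    · exact hr
    · refine absurd ?_ hw
      convert hcone _ hrw r⁻¹ (by positivity) using 1
      rw [smul_smul, inv_mul_cancel₀ hr.ne', one_smul]
  subst hr
  have hsu : s • u = 0 :=
    hstrict _ (by simpa using hmem) (by simpa using hcone u hu (-s) (by linarith))
  exact ⟨(smul_eq_zero.1 hsu).resolve_right hu0, rfl⟩

theorem nonneg_of_smul_add_smul_mem_of_slice (hconv : Convex ℝ C)
    (hcone : ∀ v ∈ C, ∀ t : ℝ, 0 ≤ t → t • v ∈ C) (hstrict : ∀ v, v ∈ C → -v ∈ C → v = 0)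
    {u w : E} (hu : u ∈ C) (hu0 : u ≠ 0) (hw : w ∉ C) (hw' : -w ∉ C) {t₁ t₂ : ℝ}
    (ht : t₁ < t₂) (hslice : ∀ t, u + t • w ∈ C → t₁ ≤ t ∧ t ≤ t₂) {a c : ℝ}
    (hmem : a • (u + t₁ • w) + c • (u + t₂ • w) ∈ C) : 0 ≤ a ∧ 0 ≤ c := by
  have hv : a • (u + t₁ • w) + c • (u + t₂ • w) = (a + c) • u + (a * t₁ + c * t₂) • w := by
    module
  rw [hv] at hmem
  rcases le_or_gt (a + c) 0 with hs | hs
  · obtain ⟨hs, hr⟩ :=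
      eq_zero_of_smul_add_smul_mem_of_nonpos hconv hcone hstrict hu hu0 hw hw' hmem hs
    have hc : c * (t₂ - t₁) = 0 := by linear_combination hr - t₁ * hs
    have hc : c = 0 := (mul_eq_zero.1 hc).resolve_right (sub_ne_zero.2 ht.ne')
    constructor <;> linarith
  · have hslice := hslice ((a * t₁ + c * t₂) / (a + c)) (by
      convert hcone _ hmem (a + c)⁻¹ (by positivity) using 1
      rw [smul_add, smul_smul, inv_mul_cancel₀ hs.ne', one_smul, smul_smul, div_eq_inv_mul])
    rw [le_div_iff₀ hs, div_le_iff₀ hs] at hslice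
    constructor <;> nlinarith [hslice.1, hslice.2]

end ConeInVectorSpace

section ConeInTopologicalVectorSpace

variable {E : Type*} [AddCommGroup E] [Module ℝ E] [TopologicalSpace E] [IsTopologicalAddGroup E]
  [ContinuousSMul ℝ E] {C : Set E}

theorem IsClosed.bddAbove_setOf_add_smul_mem (hclosed : IsClosed C)
    (hcone : ∀ v ∈ C, ∀ t : ℝ, 0 ≤ t → t • v ∈ C) (u : E) {w : E} (hw : w ∉ C) :
    BddAbove {t : ℝ | u + t • w ∈ C} := by
  by_contra hunbdd
  refine hw (hclosed.mem_of_frequently_of_tendsto (f := fun t : ℝ => t⁻¹ • u + w) (b := atTop) ?_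
    (by simpa using ((tendsto_inv_atTop_zero (𝕜 := ℝ)).smul_const u).add_const w))
  refine frequently_atTop.2 fun a => ?_
  obtain ⟨t, ht, hat⟩ := not_bddAbove_iff.1 hunbdd (max a 1)
  have htpos : 0 < t := zero_lt_one.trans_le ((le_max_right a 1).trans hat.le)
  refine ⟨t, (le_max_left a 1).trans hat.le, ?_⟩
  convert hcone _ ht t⁻¹ (inv_nonneg.2 htpos.le) using 1
  rw [smul_add, smul_smul, inv_mul_cancel₀ htpos.ne', one_smul]

theorem IsClosed.exists_slice (hclosed : IsClosed C)
    (hcone : ∀ v ∈ C, ∀ t : ℝ, 0 ≤ t → t • v ∈ C) {u w : E} (hu : u ∈ interior C)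
    (hw : w ∉ C) (hw' : -w ∉ C) :
    ∃ t₁ t₂ : ℝ, t₁ < t₂ ∧ u + t₁ • w ∈ C ∧ u + t₂ • w ∈ C ∧
      ∀ t, u + t • w ∈ C → t₁ ≤ t ∧ t ≤ t₂ := by
  set S := {t : ℝ | u + t • w ∈ C}
  have hline : Continuous fun t : ℝ => u + t • w := by fun_prop
  have hSabove : BddAbove S := hclosed.bddAbove_setOf_add_smul_mem hcone u hw
  have hSbelow : BddBelow S := by
    have hneg : -S = {t : ℝ | u + t • -w ∈ C} := by ext t; simp [S]
    rw [← bddAbove_neg, hneg]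
    exact hclosed.bddAbove_setOf_add_smul_mem hcone u hw'
  have h0 : (0 : ℝ) ∈ S := by simpa [S] using interior_subset hu
  obtain ⟨ε, hεS, hε⟩ : ∃ ε ∈ S, 0 < ε := by
    have hnhds : ∀ᶠ t in 𝓝 (0 : ℝ), t ∈ S :=
      hline.continuousAt.preimage_mem_nhds (by simpa using mem_interior_iff_mem_nhds.1 hu)
    exact ((hnhds.filter_mono nhdsWithin_le_nhds).and self_mem_nhdsWithin).exists (f := 𝓝[>] 0)
  have hslice : ∀ t ∈ S, sInf S ≤ t ∧ t ≤ sSup S :=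
    fun t ht => ⟨csInf_le hSbelow ht, le_csSup hSabove ht⟩
  have hSclosed : IsClosed S := hclosed.preimage hline
  exact ⟨sInf S, sSup S, (hslice 0 h0).1.trans_lt (hε.trans_le (hslice ε hεS).2),
    hSclosed.csInf_mem ⟨0, h0⟩ hSbelow, hSclosed.csSup_mem ⟨0, h0⟩ hSabove, hslice⟩

theorem IsClosed.exists_notMem_and_neg_notMem (hrank : 1 < Module.rank ℝ E)
    (hclosed : IsClosed C) (hstrict : ∀ v, v ∈ C → -v ∈ C → v = 0) {u : E} (hu : u ∈ C)
    (hu0 : u ≠ 0) : ∃ w, w ∉ C ∧ -w ∉ C := by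
  by_contra! hcover
  obtain ⟨v, hv0, hvC, hvC'⟩ :=
    isPreconnected_closed_iff.1 (isConnected_compl_singleton_of_one_lt_rank hrank 0).isPreconnected
      C (-C) hclosed hclosed.neg (fun v _ => or_iff_not_imp_left.2 (hcover v))
      ⟨u, hu0, hu⟩ ⟨-u, neg_ne_zero.2 hu0, by simpa using hu⟩
  exact hv0 (hstrict v hvC hvC')

end ConeInTopologicalVectorSpace

namespace Module.Basis

variable {ι E : Type*} [AddCommGroup E] [Module ℝ E]

def orthant (b : Basis ι ℝ E) : Set E := {v | ∀ i, 0 ≤ b.repr v i}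

@[simp]
theorem mem_orthant {b : Basis ι ℝ E} {v : E} : v ∈ b.orthant ↔ ∀ i, 0 ≤ b.repr v i := Iff.rfl

section Topology

variable [Finite ι] [TopologicalSpace E] [IsTopologicalAddGroup E] [ContinuousSMul ℝ E]
  [T2Space E] (b : Basis ι ℝ E)

theorem orthant_eq_preimage : b.orthant = b.equivFunL ⁻¹' univ.pi fun _ => Ici 0 := by
  ext v
  simp [Pi.le_def]

theorem isClosed_orthant : IsClosed b.orthant := by
  rw [orthant_eq_preimage]
  exact (isClosed_set_pi fun _ _ => isClosed_Ici).preimage b.equivFunL.continuous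

theorem interior_orthant : interior b.orthant = {v | ∀ i, 0 < b.repr v i} := by
  have h := b.equivFunL.toHomeomorph.preimage_interior (univ.pi fun _ => Ici 0)
  rw [ContinuousLinearEquiv.coe_toHomeomorph] at h
  rw [orthant_eq_preimage, ← h, interior_pi_set finite_univ]
  ext v
  simp

theorem mem_frontier_orthant_iff {v : E} :
    v ∈ frontier b.orthant ↔ (∀ i, 0 ≤ b.repr v i) ∧ ∃ i, b.repr v i = 0 := by
  rw [b.isClosed_orthant.frontier_eq, interior_orthant]
  simp only [Set.mem_sdiff, mem_orthant, mem_ofPred_eq, not_forall, not_lt]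
  exact and_congr_right fun hv => exists_congr fun i => ⟨fun h => le_antisymm h (hv i), le_of_eq⟩

theorem self_mem_frontier_orthant [Nontrivial ι] (i : ι) : b i ∈ frontier b.orthant := by
  obtain ⟨j, hj⟩ := exists_ne i
  classical
  refine b.mem_frontier_orthant_iff.2 ⟨fun k => ?_, j, by simp [hj.symm]⟩
  simp only [repr_self, Finsupp.single_apply]
  split_ifs <;> norm_num

theorem exists_eq_smul_of_mem_frontier_orthant (b : Basis (Fin 2) ℝ E) {v : E}
    (hv : v ∈ frontier b.orthant) (hv0 : v ≠ 0) : ∃ i, ∃ c : ℝ, 0 < c ∧ v = c • b i := by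
  obtain ⟨hnonneg, hzero⟩ := b.mem_frontier_orthant_iff.1 hv
  have hsum := b.sum_repr v
  rw [Fin.sum_univ_two] at hsum
  rcases Fin.exists_fin_two.1 hzero with hi | hi
  · have hv' : v = b.repr v 1 • b 1 := by simpa [hi] using hsum.symm
    refine ⟨1, _, (hnonneg 1).lt_of_ne fun h => hv0 ?_, hv'⟩
    rw [hv', ← h, zero_smul]
  · have hv' : v = b.repr v 0 • b 0 := by simpa [hi] using hsum.symm
    refine ⟨0, _, (hnonneg 0).lt_of_ne fun h => hv0 ?_, hv'⟩
    rw [hv', ← h, zero_smul]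

end Topology

end Module.Basis

open Module

theorem exists_basis_orthant_eq {E : Type*} [NormedAddCommGroup E] [NormedSpace ℝ E]
    (hE : finrank ℝ E = 2) {C : Set E} (hclosed : IsClosed C) (hconv : Convex ℝ C)
    (hcone : ∀ v ∈ C, ∀ t : ℝ, 0 ≤ t → t • v ∈ C) (hstrict : ∀ v, v ∈ C → -v ∈ C → v = 0)
    (hint : (interior C).Nonempty) : ∃ b : Basis (Fin 2) ℝ E, b.orthant = C := by
  have : Nontrivial E := nontrivial_of_finrank_eq_succ hE
  have : FiniteDimensional ℝ E := Module.finite_of_finrank_eq_succ hE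
  obtain ⟨u, hu, hu0⟩ : ∃ u ∈ interior C, u ≠ 0 := by
    by_contra! h
    exact not_isOpen_singleton (0 : E) (hint.subset_singleton_iff.1 h ▸ isOpen_interior)
  have huC := interior_subset hu
  obtain ⟨w, hw, hw'⟩ := hclosed.exists_notMem_and_neg_notMem
    (by rw [← finrank_eq_rank, hE]; norm_num) hstrict huC hu0
  obtain ⟨t₁, t₂, ht, hx₁, hx₂, hslice⟩ := hclosed.exists_slice hcone hu hw hw'
  have hcoeff {a c : ℝ} := nonneg_of_smul_add_smul_mem_of_slice (a := a) (c := c)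
    hconv hcone hstrict huC hu0 hw hw' ht hslice
  have hind : LinearIndependent ℝ ![u + t₁ • w, u + t₂ • w] := by
    refine LinearIndependent.pair_iff.2 fun a c hac => ?_
    have h0 : (0 : E) ∈ C := by simpa using hcone u huC 0 le_rfl
    have hpos := hcoeff (hac ▸ h0)
    have hneg := hcoeff (a := -a) (c := -c) (by
      rw [neg_smul, neg_smul, ← neg_add, hac, neg_zero]
      exact h0)
    constructor <;> linarith [hpos.1, hpos.2, hneg.1, hneg.2]
  let b := basisOfLinearIndependentOfCardEqFinrank hind (by simp [hE])
  have hb : ∀ v, b.repr v 0 • (u + t₁ • w) + b.repr v 1 • (u + t₂ • w) = v := fun v => by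
    simpa [b, Fin.sum_univ_two] using b.sum_repr v
  refine ⟨b, subset_antisymm (fun v hv => ?_) (fun v hv => ?_)⟩
  · rw [← hb v]
    exact hconv.add_mem_of_smul_mem hcone (hcone _ hx₁ _ (hv 0)) (hcone _ hx₂ _ (hv 1))
  · obtain ⟨h0, h1⟩ := hcoeff ((hb v).symm ▸ hv)
    exact Fin.forall_fin_two.2 ⟨h0, h1⟩

theorem LinearMap.det_eq_prod_of_apply_basis_eq_smul {K M ι : Type*} [Field K] [AddCommGroup M]
    [Module K M] [Fintype ι] [DecidableEq ι] (b : Basis ι K M) {f : M →ₗ[K] M} {μ : ι → K}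
    (hf : ∀ i, f (b i) = μ i • b i) : LinearMap.det f = ∏ i, μ i := by
  rw [← LinearMap.det_toMatrix b, ← Matrix.det_diagonal]
  congr 1
  ext i j
  by_cases h : i = j <;> simp [LinearMap.toMatrix_apply, hf, h]

theorem Module.Basis.exists_apply_apply_eq_smul_of_image_orthant_eq {E : Type*} [AddCommGroup E]
    [Module ℝ E] [TopologicalSpace E] [IsTopologicalAddGroup E] [ContinuousSMul ℝ E] [T2Space E]
    (b : Basis (Fin 2) ℝ E) (e : E ≃L[ℝ] E) (he : e '' b.orthant = b.orthant) :
    ∃ μ : Fin 2 → ℝ, (∀ i, 0 < μ i) ∧ ∀ i, e (e (b i)) = μ i • b i := by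
  have hfrontier : e '' frontier b.orthant = frontier b.orthant := by
    simpa [he] using e.toHomeomorph.image_frontier b.orthant
  have hray (i : Fin 2) : ∃ j, ∃ c : ℝ, 0 < c ∧ e (b i) = c • b j :=
    b.exists_eq_smul_of_mem_frontier_orthant (hfrontier ▸ mem_image_of_mem e
      (b.self_mem_frontier_orthant i)) (e.map_ne_zero_iff.2 (b.ne_zero i))
  choose σ c hc hσ using hray
  have hσinj : Function.Injective σ := by
    intro i j hij
    by_contra hne
    have hbij : b i = (c i / c j) • b j :=
      e.injective (by rw [map_smul, hσ, hσ, hij, smul_smul, div_mul_cancel₀ _ (hc j).ne'])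
    simpa [Finsupp.single_apply, Ne.symm hne] using congrArg (fun v => b.repr v i) hbij
  have hσσ : ∀ i, σ (σ i) = i :=
    (by decide : ∀ τ : Fin 2 → Fin 2, Function.Injective τ → ∀ i, τ (τ i) = i) σ hσinj
  refine ⟨fun i => c i * c (σ i), fun i => mul_pos (hc i) (hc (σ i)), fun i => ?_⟩
  rw [hσ, map_smul, hσ, hσσ, smul_smul]

/-- Let `C ⊆ ℝ²` be a strict closed convex cone with nonempty interior, preserved by
`g ∈ GL(2,ℤ)`. Then there are two linearly independent vectors `x₁, x₂` on the frontier
of `C` (and in `C`) and positive reals `α, β` with `α·β = 1` such that `g²` scales `x₁`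
by `α` and `x₂` by `β`. -/
theorem cone_boundary_eigenvectors (C : Set (Fin 2 → ℝ))
    (hclosed : IsClosed C) (hconv : Convex ℝ C)
    (hcone : ∀ v ∈ C, ∀ t : ℝ, 0 ≤ t → t • v ∈ C)
    (hstrict : ∀ v : Fin 2 → ℝ, v ∈ C → -v ∈ C → v = 0)
    (hint : (interior C).Nonempty)
    (g : Matrix (Fin 2) (Fin 2) ℤ) (hg : g.det = 1 ∨ g.det = -1)
    (hpres : (fun v : Fin 2 → ℝ => (g.map (Int.cast : ℤ → ℝ)).mulVec v) '' C = C) :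
    ∃ x₁ x₂ : Fin 2 → ℝ, x₁ ∈ C ∧ x₂ ∈ C ∧ x₁ ∈ frontier C ∧ x₂ ∈ frontier C ∧
      LinearIndependent ℝ ![x₁, x₂] ∧
      ∃ α β : ℝ, 0 < α ∧ 0 < β ∧ α * β = 1 ∧
        ((g ^ 2).map (Int.cast : ℤ → ℝ)).mulVec x₁ = α • x₁ ∧
        ((g ^ 2).map (Int.cast : ℤ → ℝ)).mulVec x₂ = β • x₂ := by
  obtain ⟨b, rfl⟩ := exists_basis_orthant_eq (by simp) hclosed hconv hcone hstrict hint
  set M := g.map (Int.cast : ℤ → ℝ)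
  have hdet : (g ^ 2).det = 1 := by rcases hg with h | h <;> simp [h]
  have hMdet : LinearMap.det (Matrix.toLin' M) ≠ 0 := by
    rw [LinearMap.det_toLin', ← Int.cast_det]
    rcases hg with h | h <;> simp [h]
  let e := (LinearMap.equivOfDetNeZero _ hMdet).toContinuousLinearEquiv
  have hsq (v : Fin 2 → ℝ) : ((g ^ 2).map (Int.cast : ℤ → ℝ)).mulVec v = e (e v) := by
    change _ = M.mulVec (M.mulVec v)
    rw [Matrix.mulVec_mulVec, pow_two]
    congr 1
    exact Matrix.map_mul (f := Int.castRingHom ℝ)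
  obtain ⟨μ, hμ, heig⟩ := b.exists_apply_apply_eq_smul_of_image_orthant_eq e hpres
  have hprod : μ 0 * μ 1 = 1 := by
    rw [← Fin.prod_univ_two, ← LinearMap.det_eq_prod_of_apply_basis_eq_smul b
      (f := Matrix.toLin' ((g ^ 2).map (Int.cast : ℤ → ℝ))) fun i => by simp [hsq, heig],
      LinearMap.det_toLin', ← Int.cast_det, hdet, Int.cast_one]
  have hfrontier := b.self_mem_frontier_orthant
  refine ⟨b 0, b 1, b.isClosed_orthant.frontier_subset (hfrontier 0),
    b.isClosed_orthant.frontier_subset (hfrontier 1), hfrontier 0, hfrontier 1, ?_,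
    μ 0, μ 1, hμ 0, hμ 1, hprod, by rw [hsq, heig], by rw [hsq, heig]⟩
  have hpair : ![b 0, b 1] = ⇑b := by ext i; fin_cases i <;> rfl
  exact hpair ▸ b.linearIndependent
end

section
/- Let C ⊆ ℝ² be a strict closed convex cone with nonempty interior and let g ∈ GL(2,ℤ) preserve C. If there exists a nonzero vector v with integer coordinates lying on the frontier of C with v ∈ C, then g² is the identity matrix. -/
/-!
The cone `C` is simplicial. A functional `f ≤ 0` on `C` supports it along the rational ray
`ℝ≥0 w`, and sliding an interior point in the direction `-w` until it leaves `C` (it does, since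
strictness gives a functional `h ≥ 0` on `C` with `h w > 0`) produces a second boundary vector
`v`; every point of `C` is then `a w + c v` with `a, c ≥ 0`. In the basis `(w, v)` both `g` and
`g⁻¹` have nonnegative matrices, which in size 2 forces `g²` to be diagonal with nonnegative
eigenvalues `λ, μ`. Since `g²` is integral with determinant 1 and `w` is integral, `λ` is a
nonnegative rational root of `X² - (tr g²) X + 1`, so `λ = 1` by the integral root theorem; then
`tr g² = 2`, hence `μ = 1` and `g² = 1`.
-/

open Module Set Polynomial Matrix

variable {E : Type*} [NormedAddCommGroup E] [NormedSpace ℝ E]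

def ProperCone.ofIsClosed (C : Set E) (hclosed : IsClosed C) (hconv : Convex ℝ C)
    (hcone : ∀ x ∈ C, ∀ t : ℝ, 0 ≤ t → t • x ∈ C) (hne : C.Nonempty) : ProperCone ℝ E where
  carrier := C
  zero_mem' := by
    obtain ⟨x, hx⟩ := hne
    simpa using hcone x hx 0 le_rfl
  add_mem' {x y} hx hy := by
    convert hcone _ (hconv hx hy one_half_pos.le one_half_pos.le (add_halves 1)) 2 zero_le_two
      using 1
    module
  smul_mem' c x hx := hcone x hx c c.2
  isClosed' := hclosed

theorem ProperCone.exists_dual_of_mem_frontier (K : ProperCone ℝ E)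
    (hint : (interior (K : Set E)).Nonempty) {w : E} (hw : w ∈ frontier (K : Set E)) :
    ∃ f : StrongDual ℝ E, (∀ x ∈ K, f x ≤ 0) ∧ f w = 0 ∧ ∃ u ∈ K, f u < 0 := by
  obtain ⟨f, hf⟩ := geometric_hahn_banach_open_point K.convex.interior isOpen_interior hw.2
  have hle : ∀ x ∈ K, f x ≤ f w := by
    intro x hx
    have hx' : x ∈ closure (interior (K : Set E)) := by
      rw [K.convex.closure_interior_eq_closure_of_nonempty_interior hint]
      exact subset_closure hx
    exact closure_minimal (fun y hy => (hf y hy).le) (isClosed_Iic.preimage f.continuous) hx'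
  have hfw : f w = 0 := by
    have hwK : w ∈ K := K.isClosed.frontier_subset hw
    have h2 := hle _ (K.smul_mem hwK zero_le_two)
    have h0 := hle 0 K.zero_mem
    rw [map_smul, smul_eq_mul] at h2
    rw [map_zero] at h0
    linarith
  obtain ⟨u, hu⟩ := hint
  exact ⟨f, fun x hx => hfw ▸ hle x hx, hfw, u, interior_subset hu, hfw ▸ hf u hu⟩

theorem IsClosed.exists_isLeast_add_smul_mem {S : Set E} (hS : IsClosed S) {h : StrongDual ℝ E}
    (hh : ∀ x ∈ S, 0 ≤ h x) {u w : E} (hu : u ∈ S) (hw : 0 < h w) :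
    ∃ m, IsLeast {t : ℝ | u + t • w ∈ S} m := by
  refine ⟨_, IsClosed.isLeast_csInf ?_ ⟨0, by simpa using hu⟩ ⟨-(h u / h w), fun t ht => ?_⟩⟩
  · exact hS.preimage (by fun_prop)
  · have := hh _ ht
    rw [map_add, map_smul, smul_eq_mul] at this
    rw [neg_le, le_div_iff₀ hw]
    linarith

theorem ProperCone.exists_linearIndependent_of_mem_frontier (K : ProperCone ℝ E)
    (hint : (interior (K : Set E)).Nonempty) {w : E} (hw : w ∈ frontier (K : Set E))
    (hw' : -w ∉ K) :
    ∃ v ∈ K, LinearIndependent ℝ ![w, v] ∧ ∀ a c : ℝ, a • w + c • v ∈ K → 0 ≤ a ∧ 0 ≤ c := by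
  obtain ⟨f, hfK, hfw, u, huK, hfu⟩ := K.exists_dual_of_mem_frontier hint hw
  obtain ⟨h, hhK, hhw⟩ := K.hyperplane_separation_point hw'
  replace hhw : 0 < h w := by simpa using hhw
  obtain ⟨m, hmK, hm⟩ := K.isClosed.exists_isLeast_add_smul_mem hhK huK hhw
  set v := u + m • w
  have hf : ∀ a c : ℝ, f (a • w + c • v) = c * f u := by simp [v, hfw]
  refine ⟨v, hmK, LinearIndependent.pair_iff.2 fun a c hac => ?_, fun a c hac => ?_⟩
  · have hc : c = 0 := by simpa [hfu.ne] using (hf a c).symm.trans (congrArg f hac)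
    have hw0 : w ≠ 0 := by
      rintro rfl
      exact hw' (by simp)
    subst hc
    simpa [hw0] using hac
  have hc : 0 ≤ c := by nlinarith [hfK _ hac, hf a c]
  refine ⟨?_, hc⟩
  rcases hc.eq_or_lt with rfl | hc
  · have := hhK _ hac
    simp only [zero_smul, add_zero, map_smul, smul_eq_mul] at this
    exact nonneg_of_mul_nonneg_left this hhw
  · have hmem : u + (m + a / c) • w ∈ K := by
      convert K.smul_mem hac (inv_nonneg.2 hc.le) using 1
      simp only [v]
      match_scalars <;> field_simp
      ring
    have := mul_nonneg (sub_nonneg.2 (hm hmem)) hc.le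
    rwa [add_sub_cancel_left, div_mul_cancel₀ _ hc.ne'] at this

theorem ProperCone.exists_basis_of_mem_frontier (hE : finrank ℝ E = 2) (K : ProperCone ℝ E)
    (hint : (interior (K : Set E)).Nonempty) {w : E} (hw : w ∈ frontier (K : Set E))
    (hw' : -w ∉ K) :
    ∃ b : Basis (Fin 2) ℝ E, b 0 = w ∧ (∀ i, b i ∈ K) ∧ ∀ x ∈ K, ∀ i, 0 ≤ b.repr x i := by
  obtain ⟨v, hvK, hli, hcoeff⟩ := K.exists_linearIndependent_of_mem_frontier hint hw hw'
  let b := basisOfLinearIndependentOfCardEqFinrank hli (by simp [hE])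
  have hb : ⇑b = ![w, v] := coe_basisOfLinearIndependentOfCardEqFinrank _ _
  refine ⟨b, by simp [hb], fun i => ?_, fun x hx i => ?_⟩
  · fin_cases i
    exacts [by simpa [hb] using K.isClosed.frontier_subset hw, by simpa [hb] using hvK]
  · have hx' : b.repr x 0 • w + b.repr x 1 • v ∈ K := by
      convert hx
      conv_rhs => rw [← b.sum_repr x]
      simp [Fin.sum_univ_two, hb]
    fin_cases i
    exacts [(hcoeff _ _ hx').1, (hcoeff _ _ hx').2]

theorem Matrix.isDiag_mul_self_of_mul_eq_one {R : Type*} [CommRing R] [LinearOrder R]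
    [IsStrictOrderedRing R] {Q P : Matrix (Fin 2) (Fin 2) R} (hQ : ∀ i j, 0 ≤ Q i j)
    (hP : ∀ i j, 0 ≤ P i j) (hQP : Q * P = 1) : (Q * Q).IsDiag := by
  have e : ∀ i j, Q i 0 * P 0 j + Q i 1 * P 1 j = (1 : Matrix (Fin 2) (Fin 2) R) i j := by
    intro i j
    rw [← hQP, mul_apply, Fin.sum_univ_two]
  -- Off-diagonal entries of `Q * P = 1` are sums of nonnegative products, so each product is 0.
  have z : ∀ i j, i ≠ j → Q i 0 * P 0 j = 0 ∧ Q i 1 * P 1 j = 0 := fun i j hij =>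
    (add_eq_zero_iff_of_nonneg (mul_nonneg (hQ _ _) (hP _ _)) (mul_nonneg (hQ _ _) (hP _ _))).1
      (by simpa [one_apply_ne hij] using e i j)
  obtain ⟨z₁, z₂⟩ := z 0 1 (by decide)
  obtain ⟨z₃, z₄⟩ := z 1 0 (by decide)
  have e₁ := e 0 0
  have e₂ := e 1 1
  simp only [one_apply_eq] at e₁ e₂
  have h₁ : Q 0 1 * Q 0 0 = 0 := by
    linear_combination (-Q 0 1 * Q 0 0) * e₂ + Q 0 1 * Q 1 0 * z₁ + Q 0 0 * Q 1 1 * z₂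
  have h₂ : Q 1 0 * Q 1 1 = 0 := by
    linear_combination (-Q 1 0 * Q 1 1) * e₁ + Q 1 0 * Q 0 1 * z₄ + Q 1 1 * Q 0 0 * z₃
  have d₁ : (Q * Q) 0 1 = 0 := by
    rw [mul_apply, Fin.sum_univ_two]
    linear_combination (-Q 0 1 * Q 1 1) * e₁ + Q 1 1 * P 0 0 * h₁ + Q 0 1 ^ 2 * z₄ + h₁
  have d₂ : (Q * Q) 1 0 = 0 := by
    rw [mul_apply, Fin.sum_univ_two]
    linear_combination (-Q 1 0 * Q 0 0) * e₂ + Q 0 0 * P 1 1 * h₂ + Q 1 0 ^ 2 * z₁ + h₂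
  intro i j hij
  fin_cases i <;> fin_cases j
  exacts [absurd rfl hij, d₁, d₂, absurd rfl hij]

theorem Module.End.exists_nonneg_mul_self_apply_eq_smul {b : Basis (Fin 2) ℝ E} {K : Set E}
    (hb : ∀ i, b i ∈ K) (hK : ∀ x ∈ K, ∀ i, 0 ≤ b.repr x i) {T T' : Module.End ℝ E}
    (hTT' : T * T' = 1) (hT : MapsTo T K K) (hT' : MapsTo T' K K) (i : Fin 2) :
    ∃ c : ℝ, 0 ≤ c ∧ (T * T) (b i) = c • b i := by
  have hmat : ∀ {S : Module.End ℝ E}, MapsTo S K K → ∀ i j, 0 ≤ LinearMap.toMatrix b b S i j :=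
    fun hS i j => by rw [LinearMap.toMatrix_apply]; exact hK _ (hS (hb j)) i
  have hdiag := isDiag_mul_self_of_mul_eq_one (hmat hT) (hmat hT')
    (by rw [← LinearMap.toMatrix_mul, hTT', LinearMap.toMatrix_one])
  rw [← LinearMap.toMatrix_mul] at hdiag
  refine ⟨_, hmat (S := T * T) (fun _ hx => hT (hT hx)) i i, b.ext_elem fun k => ?_⟩
  rw [← LinearMap.toMatrix_apply, map_smul, Basis.repr_self, Finsupp.smul_apply,
    Finsupp.single_apply]
  split_ifs with hik
  · rw [hik, smul_eq_mul, mul_one]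
  · rw [hdiag (Ne.symm hik), smul_zero]

theorem Matrix.sq_sub_trace_mul_add_det_eq_zero {K : Type*} [Field K]
    {N : Matrix (Fin 2) (Fin 2) K} {x : Fin 2 → K} {c : K} (hx : x ≠ 0) (h : N *ᵥ x = c • x) :
    c ^ 2 - N.trace * c + N.det = 0 := by
  have hdet : (N - c • 1).det = 0 :=
    exists_mulVec_eq_zero_iff.1 ⟨x, hx, by rw [sub_mulVec, h, smul_mulVec,
      one_mulVec, sub_self]⟩
  rw [det_fin_two] at hdet
  rw [det_fin_two, trace_fin_two]
  simp only [sub_apply, smul_apply, one_apply_eq,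
    one_apply_ne (show (0 : Fin 2) ≠ 1 by decide),
    one_apply_ne (show (1 : Fin 2) ≠ 0 by decide), smul_eq_mul, mul_one, mul_zero,
    sub_zero] at hdet
  linear_combination hdet

theorem Rat.eq_one_of_sq_sub_mul_add_one_eq_zero {q : ℚ} (hq : 0 ≤ q) {n : ℤ}
    (h : q ^ 2 - n * q + 1 = 0) : q = 1 := by
  obtain ⟨k, rfl, hk⟩ := exists_integer_of_is_root_of_monic (p := X ^ 2 - C n * X + 1) (r := q)
    (by monicity!) (by simpa using h)
  rw [algebraMap_int_eq, eq_intCast, Int.cast_nonneg_iff] at hq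
  rw [algebraMap_int_eq, eq_intCast, Int.eq_one_of_dvd_one hq (by simpa using hk), Int.cast_one]

theorem Matrix.eigenvalue_eq_one_of_intCast {g : Matrix (Fin 2) (Fin 2) ℤ} (hg : g.det = 1)
    {w : Fin 2 → ℤ} (hw : w ≠ 0) {c : ℝ} (hc : 0 ≤ c)
    (h : g.map (Int.cast : ℤ → ℝ) *ᵥ (fun i => (w i : ℝ)) = c • fun i => (w i : ℝ)) : c = 1 := by
  obtain ⟨i, hi⟩ := Function.ne_iff.1 hw
  have hci : c * w i = (g *ᵥ w) i := by
    have := congrFun h i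
    simp only [Pi.smul_apply, smul_eq_mul] at this
    rw [← this]
    exact (RingHom.map_mulVec (Int.castRingHom ℝ) g w i).symm
  set q : ℚ := (g *ᵥ w) i / w i
  have hcq : c = q := by
    push_cast [q]
    rw [← hci, mul_div_cancel_right₀ _ (by exact_mod_cast hi)]
  have hw' : (fun i => (w i : ℝ)) ≠ 0 := fun h0 =>
    hw (funext fun j => by simpa using congrFun h0 j)
  have hroot := sq_sub_trace_mul_add_det_eq_zero hw' h
  rw [← Int.cast_det, hg, hcq, show (g.map Int.cast).trace = (g.trace : ℝ) by
    simp [trace_fin_two]] at hroot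
  have hq : q ^ 2 - g.trace * q + 1 = 0 := by exact_mod_cast hroot
  rw [hcq, Rat.eq_one_of_sq_sub_mul_add_one_eq_zero (by exact_mod_cast hcq ▸ hc) hq, Rat.cast_one]

theorem Matrix.eq_one_of_mulVec_basis_eq_smul {g : Matrix (Fin 2) (Fin 2) ℤ} (hg : g.det = 1)
    {w : Fin 2 → ℤ} (hw : w ≠ 0) (b : Basis (Fin 2) ℝ (Fin 2 → ℝ))
    (hb : b 0 = fun i => (w i : ℝ))
    (h : ∀ i, ∃ c : ℝ, 0 ≤ c ∧ g.map (Int.cast : ℤ → ℝ) *ᵥ b i = c • b i) : g = 1 := by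
  set N := g.map (Int.cast : ℤ → ℝ)
  have hdet : N.det = 1 := by rw [← Int.cast_det, hg, Int.cast_one]
  obtain ⟨c₀, hc₀, h₀⟩ := h 0
  have htr : N.trace = 2 := by
    have := sq_sub_trace_mul_add_det_eq_zero (b.ne_zero 0) h₀
    rw [eigenvalue_eq_one_of_intCast hg hw hc₀ (hb ▸ h₀), hdet] at this
    linear_combination -this
  have hfix : ∀ i, N *ᵥ b i = b i := by
    intro i
    obtain ⟨c, -, hc⟩ := h i
    have hroot := sq_sub_trace_mul_add_det_eq_zero (b.ne_zero i) hc
    rw [htr, hdet] at hroot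
    have hc1 : c = 1 := by nlinarith [sq_nonneg (c - 1)]
    rw [hc, hc1, one_smul]
  have hN : N = 1 := toLin'.injective (b.ext fun i => by simp [hfix])
  exact map_injective Int.cast_injective <|
    hN.trans (Matrix.map_one _ Int.cast_zero Int.cast_one).symm

theorem sq_eq_one_of_rational_boundary_ray_general (C : Set (Fin 2 → ℝ))
    (hclosed : IsClosed C) (hconv : Convex ℝ C)
    (hcone : ∀ v ∈ C, ∀ t : ℝ, 0 ≤ t → t • v ∈ C)
    (hstrict : ∀ v : Fin 2 → ℝ, v ∈ C → -v ∈ C → v = 0)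
    (hint : (interior C).Nonempty)
    (g : Matrix (Fin 2) (Fin 2) ℤ) (hg : g.det = 1 ∨ g.det = -1)
    (hpres : (fun v : Fin 2 → ℝ => (g.map (Int.cast : ℤ → ℝ)).mulVec v) '' C = C)
    (w : Fin 2 → ℤ) (hw : w ≠ 0)
    (hwfr : (fun i => (w i : ℝ)) ∈ frontier C) :
    g ^ 2 = 1 := by
  set M := g.map (Int.cast : ℤ → ℝ)
  let K := ProperCone.ofIsClosed C hclosed hconv hcone (hint.mono interior_subset)
  have hw' : -(fun i => (w i : ℝ)) ∉ K := fun hneg => hw <| funext fun i => by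
    simpa using congrFun (hstrict _ (hclosed.frontier_subset hwfr) hneg) i
  obtain ⟨b, hb0, hbK, hKb⟩ := K.exists_basis_of_mem_frontier (by simp) hint hwfr hw'
  have hM : IsUnit M.det := by
    rw [← Int.cast_det]
    rcases hg with h | h <;> simp [h]
  have hMC : MapsTo (toLinAlgEquiv' M) C C := fun x hx => hpres ▸ mem_image_of_mem _ hx
  have hMC' : MapsTo (toLinAlgEquiv' M⁻¹) C C := by
    intro x hx
    rw [← hpres] at hx
    obtain ⟨y, hy, rfl⟩ := hx
    rwa [toLinAlgEquiv'_apply, mulVec_mulVec, nonsing_inv_mul _ hM, one_mulVec]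
  have hdet : (g ^ 2).det = 1 := by
    rw [det_pow]
    rcases hg with h | h <;> simp [h]
  refine eq_one_of_mulVec_basis_eq_smul hdet hw b hb0 fun i => ?_
  obtain ⟨c, hc, h⟩ := Module.End.exists_nonneg_mul_self_apply_eq_smul hbK hKb
    (by rw [← map_mul, mul_nonsing_inv _ hM, map_one]) hMC hMC' i
  refine ⟨c, hc, ?_⟩
  rwa [← map_mul, toLinAlgEquiv'_apply, ← pow_two, show M ^ 2 = (g ^ 2).map Int.cast from
    (map_pow (Int.castRingHom ℝ).mapMatrix g 2).symm] at h

/-- Let `C ⊆ ℝ²` be a strict closed convex cone with nonempty interior, preserved by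
`g ∈ GL(2,ℤ)`. If some nonzero integral vector lies on the frontier of `C` (and in `C`),
then `g² = 1`. -/
theorem sq_eq_one_of_rational_boundary_ray (C : Set (Fin 2 → ℝ))
    (hclosed : IsClosed C) (hconv : Convex ℝ C)
    (hcone : ∀ v ∈ C, ∀ t : ℝ, 0 ≤ t → t • v ∈ C)
    (hstrict : ∀ v : Fin 2 → ℝ, v ∈ C → -v ∈ C → v = 0)
    (hint : (interior C).Nonempty)
    (g : Matrix (Fin 2) (Fin 2) ℤ) (hg : g.det = 1 ∨ g.det = -1)
    (hpres : (fun v : Fin 2 → ℝ => (g.map (Int.cast : ℤ → ℝ)).mulVec v) '' C = C)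
    (w : Fin 2 → ℤ) (hw : w ≠ 0)
    (hwC : (fun i => (w i : ℝ)) ∈ C)
    (hwfr : (fun i => (w i : ℝ)) ∈ frontier C) :
    g ^ 2 = 1 :=
  sq_eq_one_of_rational_boundary_ray_general C hclosed hconv hcone hstrict hint g hg hpres w hw hwfr
end

section
/- Let n be an odd positive integer, let C ⊆ ℝ² be a strict closed convex cone with nonempty interior, and let g ∈ GL(2,ℤ) preserve C. Let P : ℝ² → ℝ be a homogeneous polynomial function of degree n such that P(g·v) = P(v) for all v ∈ ℝ², and such that P(v₀) ≠ 0 for some v₀ in the interior of C. Then g² is the identity matrix. -/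
/-!
Let `H` be the real matrix of `g ^ 2`. Then `det H = 1`, `H ^ 2 = s • H - 1` and
`s = (tr g) ^ 2 - 2 det g` is an integer other than `1`.

* If `s ≤ 0`, then `-x = H²x + (-s) • Hx ∈ C` for every `x ∈ C`, so the strict cone `C` would be
  `{0}`, which has empty interior.
* If `s = 2`, then `H` is unipotent: for `x ∈ C` the whole orbit `x + m • (Hx - x)`, `m ∈ ℤ`, lies
  in `C`, so by closedness `±(Hx - x) ∈ C`. Hence `H` fixes `C`, which spans `ℝ²`, and `H = 1`.
* If `s > 2`, then `H` has eigenvalues `σ > 1 > σ⁻¹`. Writing `v = u + w` in eigenvectors,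
  invariance gives `P(x • u + x⁻¹ • w) = P(v)` for `x = σᵐ`, so by homogeneity the polynomial
  `x ↦ P(x² • u + w) - xⁿ P(v)` has the infinitely many roots `σᵐ` and vanishes. At `x = -1` it
  gives `P(v) = -P(v)`, as `n` is odd, so `P` vanishes identically.
-/

open MvPolynomial Matrix Set Filter Topology

namespace MvPolynomial.IsHomogeneous

variable {σ : Type*}

theorem eval_smul {R : Type*} [CommSemiring R] {P : MvPolynomial σ R} {n : ℕ}
    (hP : P.IsHomogeneous n) (c : R) (v : σ → R) :
    eval (c • v) P = c ^ n * eval v P := by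
  rw [eval_eq, eval_eq, Finset.mul_sum]
  refine Finset.sum_congr rfl fun d hd => ?_
  have hdeg : ∑ i ∈ d.support, d i = n := by
    rw [← Finsupp.degree_apply, Finsupp.degree_eq_weight_one]
    exact hP (mem_support_iff.mp hd)
  simp only [Pi.smul_apply, smul_eq_mul, mul_pow, Finset.prod_mul_distrib,
    Finset.prod_pow_eq_pow_sum, hdeg]
  ring

theorem eval_add_eq_zero_of_infinite {K : Type*} [Field K] [CharZero K] {P : MvPolynomial σ K}
    {n : ℕ} (hP : P.IsHomogeneous n) (hn : Odd n) {u w : σ → K} {S : Set K} (hS : S.Infinite)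
    (h : ∀ x ∈ S, eval (x • u + x⁻¹ • w) P = eval (u + w) P) : eval (u + w) P = 0 := by
  set Q : Polynomial K :=
    MvPolynomial.aeval (fun i => Polynomial.C (u i) * Polynomial.X ^ 2 + Polynomial.C (w i)) P
  have hQ : ∀ x, Q.eval x = eval (x ^ 2 • u + w) P := by
    intro x
    rw [← Polynomial.coe_aeval_eq_eval, comp_aeval_apply, aeval_eq_eval]
    congr 2
    funext i
    simp only [Polynomial.coe_aeval_eq_eval, Polynomial.eval_add, Polynomial.eval_mul,
      Polynomial.eval_C, Polynomial.eval_pow, Polynomial.eval_X, Pi.add_apply, Pi.smul_apply,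
      smul_eq_mul, mul_comm]
  have hQS : ∀ x ∈ S \ {0}, Q.eval x = x ^ n * eval (u + w) P := by
    rintro x ⟨hxS, hx0⟩
    have hx : x ^ 2 • u + w = x • (x • u + x⁻¹ • w) := by
      rw [smul_add, smul_smul, smul_smul, sq, mul_inv_cancel₀ hx0, one_smul]
    rw [hQ, hx, hP.eval_smul, h x hxS]
  have hQ_eq : Q = Polynomial.C (eval (u + w) P) * Polynomial.X ^ n := by
    rw [← sub_eq_zero]
    apply Polynomial.eq_zero_of_infinite_isRoot
    refine (hS.sdiff (finite_singleton 0)).mono fun x hx => ?_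
    simp only [mem_ofPred_eq, Polynomial.IsRoot, Polynomial.eval_sub, Polynomial.eval_mul,
      Polynomial.eval_C, Polynomial.eval_pow, Polynomial.eval_X, hQS x hx, mul_comm, sub_self]
  have hc := hQ (-1)
  rw [hQ_eq] at hc
  simp only [Polynomial.eval_mul, Polynomial.eval_C, Polynomial.eval_pow, Polynomial.eval_X,
    hn.neg_one_pow, neg_one_sq, one_smul] at hc
  have h2 : (2 : K) * eval (u + w) P = 0 := by linear_combination -hc
  exact (mul_eq_zero.mp h2).resolve_left two_ne_zero

end MvPolynomial.IsHomogeneous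

theorem Real.exists_one_lt_add_inv_eq {s : ℝ} (hs : 2 < s) : ∃ σ : ℝ, 1 < σ ∧ σ + σ⁻¹ = s := by
  set r := √(s ^ 2 - 4)
  have hr : r ^ 2 = s ^ 2 - 4 := Real.sq_sqrt (by nlinarith)
  have hr0 : 0 ≤ r := Real.sqrt_nonneg _
  refine ⟨(s + r) / 2, by linarith, ?_⟩
  rw [inv_eq_of_mul_eq_one_right (b := (s - r) / 2) (by linear_combination -hr / 4)]
  ring

section Cone

variable {E : Type*} [TopologicalSpace E] [AddCommGroup E] [Module ℝ E] [ContinuousAdd E]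
  [ContinuousSMul ℝ E] {C : Set E}

theorem IsClosed.mem_of_forall_add_natCast_smul_mem (hC : IsClosed C)
    (hcone : ∀ v ∈ C, ∀ t : ℝ, 0 ≤ t → t • v ∈ C) {x z : E} (h : ∀ m : ℕ, x + (m : ℝ) • z ∈ C) :
    z ∈ C := by
  have hlim : Tendsto (fun m : ℕ => (1 / ((m : ℝ) + 1)) • x + z) atTop (𝓝 z) := by
    simpa using ((tendsto_one_div_add_atTop_nhds_zero_nat (𝕜 := ℝ)).smul_const x).add_const z
  refine hC.mem_of_tendsto hlim (Eventually.of_forall fun m => ?_)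
  have hm : ((m : ℝ) + 1) ≠ 0 := by positivity
  convert hcone _ (h (m + 1)) (1 / ((m : ℝ) + 1)) (by positivity) using 1
  rw [smul_add, smul_smul, Nat.cast_succ, one_div, inv_mul_cancel₀ hm, one_smul]

end Cone

namespace Matrix

theorem sq_eq_trace_smul_sub_det_smul {R : Type*} [CommRing R] (A : Matrix (Fin 2) (Fin 2) R) :
    A ^ 2 = A.trace • A - A.det • 1 := by
  ext i j
  fin_cases i <;> fin_cases j <;>
    simp [sq, mul_apply, trace_fin_two, det_fin_two, Fin.sum_univ_two] <;> ring

theorem trace_sq_fin_two {R : Type*} [CommRing R] (A : Matrix (Fin 2) (Fin 2) R) :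
    (A ^ 2).trace = A.trace ^ 2 - 2 * A.det := by
  rw [sq_eq_trace_smul_sub_det_smul, trace_sub, trace_smul, trace_smul, trace_one]
  simp only [smul_eq_mul, Fintype.card_fin, Nat.cast_ofNat]
  ring

theorem det_sq_eq_one {g : Matrix (Fin 2) (Fin 2) ℤ} (hg : g.det = 1 ∨ g.det = -1) :
    (g ^ 2).det = 1 := by
  rcases hg with h | h <;> simp [det_pow, h]

theorem trace_sq_nonpos_or_eq_two_or_two_lt {g : Matrix (Fin 2) (Fin 2) ℤ}
    (hg : g.det = 1 ∨ g.det = -1) : (g ^ 2).trace ≤ 0 ∨ (g ^ 2).trace = 2 ∨ 2 < (g ^ 2).trace := by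
  have htrace : (g ^ 2).trace ≠ 1 := by
    rw [trace_sq_fin_two]
    rcases hg with h | h <;> rw [h] <;> intro ht
    · have h1 : -1 ≤ g.trace := by nlinarith
      have h2 : g.trace ≤ 1 := by nlinarith
      interval_cases g.trace <;> omega
    · nlinarith
  omega

theorem map_intCast_sq_of_det_eq_one {R : Type*} [CommRing R] {g : Matrix (Fin 2) (Fin 2) ℤ}
    (hg : g.det = 1) : g.map (Int.cast : ℤ → R) ^ 2 = (g.trace : R) • g.map Int.cast - 1 := by
  have htr : (g.map (Int.cast : ℤ → R)).trace = g.trace :=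
    (AddMonoidHom.map_trace (Int.castAddHom R) g).symm
  have hdet : (g.map (Int.cast : ℤ → R)).det = 1 := by
    rw [← Int.cast_one, ← hg]
    exact ((Int.castRingHom R).map_det g).symm
  rw [sq_eq_trace_smul_sub_det_smul, htr, hdet, one_smul]

variable {ι : Type*} [Fintype ι] [DecidableEq ι]

theorem exists_eigen_decomposition_of_sq_eq {K : Type*} [Field K] {A : Matrix ι ι K} {σ : K}
    (hσ : σ ≠ σ⁻¹) (hA : A ^ 2 = (σ + σ⁻¹) • A - 1) (v : ι → K) :
    ∃ u w, A *ᵥ u = σ • u ∧ A *ᵥ w = σ⁻¹ • w ∧ u + w = v := by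
  have hσ0 : σ ≠ 0 := by rintro rfl; simp at hσ
  have hδ : σ - σ⁻¹ ≠ 0 := sub_ne_zero.mpr hσ
  have hAA : A *ᵥ (A *ᵥ v) = (σ + σ⁻¹) • A *ᵥ v - v := by
    rw [mulVec_mulVec, ← sq, hA, sub_mulVec, smul_mulVec, one_mulVec]
  refine ⟨(σ - σ⁻¹)⁻¹ • (A *ᵥ v - σ⁻¹ • v), (σ - σ⁻¹)⁻¹ • (σ • v - A *ᵥ v), ?_, ?_, ?_⟩
  · rw [mulVec_smul, mulVec_sub, mulVec_smul, hAA, smul_comm]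
    congr 1
    rw [smul_sub, smul_smul, mul_inv_cancel₀ hσ0]
    module
  · rw [mulVec_smul, mulVec_sub, mulVec_smul, hAA, smul_comm]
    congr 1
    rw [smul_sub, smul_smul, inv_mul_cancel₀ hσ0]
    module
  · rw [← smul_add, sub_add_sub_cancel', ← sub_smul, smul_smul, inv_mul_cancel₀ hδ, one_smul]

theorem eval_eq_zero_of_invariant_of_two_lt {A : Matrix ι ι ℝ} {s : ℝ} (hs : 2 < s)
    (hA : A ^ 2 = s • A - 1) {P : MvPolynomial ι ℝ} {n : ℕ} (hP : P.IsHomogeneous n)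
    (hn : Odd n) (hinv : ∀ v, eval (A *ᵥ v) P = eval v P) (v : ι → ℝ) : eval v P = 0 := by
  obtain ⟨σ, hσ, rfl⟩ := Real.exists_one_lt_add_inv_eq hs
  have hσσ : σ ≠ σ⁻¹ := ((inv_lt_one_of_one_lt₀ hσ).trans hσ).ne'
  obtain ⟨u, w, hu, hw, rfl⟩ := exists_eigen_decomposition_of_sq_eq hσσ hA v
  refine hP.eval_add_eq_zero_of_infinite hn
    (infinite_range_of_injective (pow_right_strictMono₀ hσ).injective) ?_
  rintro _ ⟨m, rfl⟩
  induction m with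
  | zero => simp
  | succ m ih =>
    have hstep : A *ᵥ (σ ^ m • u + (σ ^ m)⁻¹ • w) = σ ^ (m + 1) • u + (σ ^ (m + 1))⁻¹ • w := by
      rw [mulVec_add, mulVec_smul, mulVec_smul, hu, hw, smul_smul, smul_smul, pow_succ, mul_inv]
    rw [← ih, ← hstep, hinv]

variable {C : Set (ι → ℝ)}

theorem eq_zero_of_mem_of_sq_eq_of_nonpos (hconv : Convex ℝ C)
    (hcone : ∀ v ∈ C, ∀ t : ℝ, 0 ≤ t → t • v ∈ C) (hstrict : ∀ v, v ∈ C → -v ∈ C → v = 0)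
    {A : Matrix ι ι ℝ} {s : ℝ} (hs : s ≤ 0) (hA : A ^ 2 = s • A - 1) (hAC : MapsTo A.mulVec C C)
    {x : ι → ℝ} (hx : x ∈ C) : x = 0 := by
  have hAx := hAC hx
  have hneg : -x = A *ᵥ (A *ᵥ x) + (-s) • A *ᵥ x := by
    rw [mulVec_mulVec, ← sq, hA, sub_mulVec, smul_mulVec, one_mulVec, neg_smul]
    abel
  have hmid : (1 / 2 : ℝ) • A *ᵥ (A *ᵥ x) + (1 / 2 : ℝ) • (-s) • A *ᵥ x ∈ C :=
    hconv (hAC hAx) (hcone _ hAx _ (neg_nonneg.mpr hs)) (by norm_num) (by norm_num) (by norm_num)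
  refine hstrict x hx ?_
  convert hcone _ hmid 2 (by norm_num) using 1
  rw [hneg, smul_add, smul_smul, smul_smul]
  norm_num

theorem mulVec_eq_self_of_sq_eq_two_smul_sub_one (hC : IsClosed C)
    (hcone : ∀ v ∈ C, ∀ t : ℝ, 0 ≤ t → t • v ∈ C) (hstrict : ∀ v, v ∈ C → -v ∈ C → v = 0)
    {A : Matrix ι ι ℝ} (hA : A ^ 2 = (2 : ℝ) • A - 1) (hAC : A.mulVec '' C = C)
    {x : ι → ℝ} (hx : x ∈ C) : A *ᵥ x = x := by
  set z := A *ᵥ x - x with hzdef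
  have hz : A *ᵥ z = z := by
    rw [hzdef, mulVec_sub, mulVec_mulVec, ← sq, hA, sub_mulVec, smul_mulVec, one_mulVec, two_smul]
    abel
  have hshift : ∀ t : ℝ, A *ᵥ (x + t • z) = x + (t + 1) • z := by
    intro t
    rw [mulVec_add, mulVec_smul, hz, add_smul, one_smul, hzdef]
    abel
  have hinj : Function.Injective A.mulVec := by
    have hinv : ((2 : ℝ) • 1 - A) * A = 1 := by
      rw [sub_mul, smul_mul, one_mul, ← sq, hA, sub_sub_cancel]
    exact Function.LeftInverse.injective (g := ((2 : ℝ) • 1 - A).mulVec) fun v => by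
      rw [mulVec_mulVec, hinv, one_mulVec]
  have hfwd : ∀ m : ℕ, x + (m : ℝ) • z ∈ C := by
    intro m
    induction m with
    | zero => simpa using hx
    | succ m ih =>
      rw [Nat.cast_succ, ← hshift, ← hAC]
      exact mem_image_of_mem _ ih
  have hbwd : ∀ m : ℕ, x + (m : ℝ) • -z ∈ C := by
    intro m
    induction m with
    | zero => simpa using hx
    | succ m ih =>
      rw [← hAC] at ih
      obtain ⟨y, hy, hyx⟩ := ih
      convert hy using 1
      apply hinj
      rw [hyx]
      convert hshift (-((m : ℝ) + 1)) using 2 <;> push_cast <;> module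
  rw [← sub_eq_zero]
  exact hstrict z (hC.mem_of_forall_add_natCast_smul_mem hcone hfwd)
    (hC.mem_of_forall_add_natCast_smul_mem hcone hbwd)

theorem eq_one_of_forall_mem_mulVec_eq_self (hint : (interior C).Nonempty) {A : Matrix ι ι ℝ}
    (h : ∀ x ∈ C, A *ᵥ x = x) : A = 1 := by
  have hspan : Submodule.span ℝ C = ⊤ :=
    (Submodule.span ℝ C).eq_top_of_nonempty_interior'
      (hint.mono (interior_mono Submodule.subset_span))
  refine toLin'.injective (LinearMap.ext_on hspan fun x hx => ?_)
  simpa using h x hx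

end Matrix

theorem sq_eq_one_of_odd_invariant_form_general (n : ℕ) (hn : Odd n)
    (C : Set (Fin 2 → ℝ))
    (hclosed : IsClosed C) (hconv : Convex ℝ C)
    (hcone : ∀ v ∈ C, ∀ t : ℝ, 0 ≤ t → t • v ∈ C)
    (hstrict : ∀ v : Fin 2 → ℝ, v ∈ C → -v ∈ C → v = 0)
    (hint : (interior C).Nonempty)
    (g : Matrix (Fin 2) (Fin 2) ℤ) (hg : g.det = 1 ∨ g.det = -1)
    (hpres : (fun v : Fin 2 → ℝ => (g.map (Int.cast : ℤ → ℝ)).mulVec v) '' C = C)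
    (P : MvPolynomial (Fin 2) ℝ) (hP : P.IsHomogeneous n)
    (hinv : ∀ v : Fin 2 → ℝ,
      MvPolynomial.eval ((g.map (Int.cast : ℤ → ℝ)).mulVec v) P = MvPolynomial.eval v P)
    (hne : ∃ v₀ ∈ interior C, MvPolynomial.eval v₀ P ≠ 0) :
    g ^ 2 = 1 := by
  set G := g.map (Int.cast : ℤ → ℝ)
  set H := (g ^ 2).map (Int.cast : ℤ → ℝ)
  have hHG : H = G ^ 2 := map_pow (Int.castRingHom ℝ).mapMatrix g 2
  have hHC : H.mulVec '' C = C := by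
    have hcomp : H.mulVec = G.mulVec ∘ G.mulVec := funext fun v => by
      rw [hHG, sq, Function.comp_apply, mulVec_mulVec]
    rw [hcomp, image_comp, hpres, hpres]
  have hHP : ∀ v, eval (H *ᵥ v) P = eval v P := fun v => by
    rw [hHG, sq, ← mulVec_mulVec, hinv, hinv]
  have hHsq : H ^ 2 = ((g ^ 2).trace : ℝ) • H - 1 := map_intCast_sq_of_det_eq_one (det_sq_eq_one hg)
  rcases trace_sq_nonpos_or_eq_two_or_two_lt hg with hs | hs | hs
  · have hC0 : C ⊆ {0} := fun x hx =>
      eq_zero_of_mem_of_sq_eq_of_nonpos hconv hcone hstrict (by exact_mod_cast hs) hHsq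
        ((mapsTo_image H.mulVec C).mono_right hHC.subset) hx
    exact absurd (interior_singleton 0) (hint.mono (interior_mono hC0)).ne_empty
  · have hH1 : H = 1 := eq_one_of_forall_mem_mulVec_eq_self hint fun x hx =>
      mulVec_eq_self_of_sq_eq_two_smul_sub_one hclosed hcone hstrict
        (by rw [hHsq, hs]; norm_num) hHC hx
    refine Matrix.map_injective (Int.cast_injective (α := ℝ)) ?_
    exact hH1.trans (Matrix.map_one _ Int.cast_zero Int.cast_one).symm
  · obtain ⟨v₀, -, hv₀⟩ := hne
    exact absurd (eval_eq_zero_of_invariant_of_two_lt (by exact_mod_cast hs) hHsq hP hn hHP v₀) hv₀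

/-- Let `n` be odd, `C ⊆ ℝ²` a strict closed convex cone with nonempty interior preserved
by `g ∈ GL(2,ℤ)`, and `P` a homogeneous polynomial of degree `n` invariant under `g` and
not vanishing at some interior point of `C`. Then `g² = 1`. -/
theorem sq_eq_one_of_odd_invariant_form (n : ℕ) (hn : Odd n) (hn0 : 0 < n)
    (C : Set (Fin 2 → ℝ))
    (hclosed : IsClosed C) (hconv : Convex ℝ C)
    (hcone : ∀ v ∈ C, ∀ t : ℝ, 0 ≤ t → t • v ∈ C)
    (hstrict : ∀ v : Fin 2 → ℝ, v ∈ C → -v ∈ C → v = 0)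
    (hint : (interior C).Nonempty)
    (g : Matrix (Fin 2) (Fin 2) ℤ) (hg : g.det = 1 ∨ g.det = -1)
    (hpres : (fun v : Fin 2 → ℝ => (g.map (Int.cast : ℤ → ℝ)).mulVec v) '' C = C)
    (P : MvPolynomial (Fin 2) ℝ) (hP : P.IsHomogeneous n)
    (hinv : ∀ v : Fin 2 → ℝ,
      MvPolynomial.eval ((g.map (Int.cast : ℤ → ℝ)).mulVec v) P = MvPolynomial.eval v P)
    (hne : ∃ v₀ ∈ interior C, MvPolynomial.eval v₀ P ≠ 0) :
    g ^ 2 = 1 :=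
  sq_eq_one_of_odd_invariant_form_general n hn C hclosed hconv hcone hstrict hint g hg hpres P hP
    hinv hne
end

section
/- Let T₁ = [[1, 6], [0, −1]] and T₂ = [[−1, 0], [6, 1]] act linearly on ℝ², let G be the subgroup of GL(2,ℤ) generated by T₁ and T₂, let A = {(x, y) ∈ ℝ² : x ≥ 0 and y ≥ 0}, and let M = {0} ∪ {a·(3 + 2√2, −1) + b·(−1, 3 + 2√2) : a, b ∈ ℝ, a > 0, b > 0}. Then the union over all g ∈ G of the image g(A) equals M. -/
/-!
Write `μ = 3 + 2√2`, so that `μ + μ⁻¹ = 6`. In the coordinates `(a, b)` with respect to the rays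
`(μ, -1)` and `(-1, μ)`, the generators act by `(a, b) ↦ (μ b, μ⁻¹ a)` and `(a, b) ↦ (μ⁻¹ b, μ a)`,
so they preserve the open cone `a, b > 0`, which contains the quadrant. In terms of
`t = log_μ (b / a)` the quadrant is `|t| ≤ 1` and the generators are the reflections in `t = -1`
and `t = 1`; the translates of `[-1, 1]` under the group they generate cover the whole line.
-/

/-- `T₁ = [[1,6],[0,-1]]` as an element of `GL(2,ℤ)` (it is its own inverse). -/
def T₁ : Matrix.GeneralLinearGroup (Fin 2) ℤ :=
  ⟨!![1, 6; 0, -1], !![1, 6; 0, -1], by decide, by decide⟩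

/-- `T₂ = [[-1,0],[6,1]]` as an element of `GL(2,ℤ)` (it is its own inverse). -/
def T₂ : Matrix.GeneralLinearGroup (Fin 2) ℤ :=
  ⟨!![-1, 0; 6, 1], !![-1, 0; 6, 1], by decide, by decide⟩

open Matrix Pointwise MulAction

namespace NefConeOrbit

lemma reflect_ratio_bounds {μ a b : ℝ} (hμ : 1 < μ) (n : ℕ) (hb : 0 < b) (hab : μ * b < a)
    (h : a ≤ μ ^ (2 * (n + 1) + 1) * b) :
    μ⁻¹ * a ≤ μ ^ (2 * n + 1) * (μ * b) ∧ μ * b ≤ μ ^ (2 * n + 1) * (μ⁻¹ * a) := by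
  have hμ₀ : 0 < μ := one_pos.trans hμ
  constructor
  · rw [inv_mul_le_iff₀ hμ₀]
    linear_combination h
  · calc μ * b ≤ a := hab.le
      _ ≤ μ ^ (2 * n) * a :=
        le_mul_of_one_le_left ((mul_pos hμ₀ hb).trans hab).le (one_le_pow₀ hμ.le)
      _ = μ ^ (2 * n + 1) * (μ⁻¹ * a) := by field_simp; ring

theorem pos_pair_induction {μ : ℝ} (hμ : 1 < μ) {P : ℝ → ℝ → Prop}
    (base : ∀ a b, 0 < a → 0 < b → b ≤ μ * a → a ≤ μ * b → P a b)
    (reflect₁ : ∀ a b, P (μ * b) (μ⁻¹ * a) → P a b)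
    (reflect₂ : ∀ a b, P (μ⁻¹ * b) (μ * a) → P a b) {a b : ℝ} (ha : 0 < a) (hb : 0 < b) :
    P a b := by
  have bounded : ∀ n : ℕ, ∀ a b, 0 < a → 0 < b →
      b ≤ μ ^ (2 * n + 1) * a → a ≤ μ ^ (2 * n + 1) * b → P a b := by
    intro n
    induction n with
    | zero => simpa using base
    | succ n ih =>
      intro a b ha hb hba hab
      rcases le_or_gt a (μ * b) with hab' | hab'
      · rcases le_or_gt b (μ * a) with hba' | hba'
        · exact base a b ha hb hba' hab'
        · obtain ⟨h₁, h₂⟩ := reflect_ratio_bounds hμ n ha hba' hba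
          exact reflect₂ a b (ih _ _ (by positivity) (by positivity) h₂ h₁)
      · obtain ⟨h₁, h₂⟩ := reflect_ratio_bounds hμ n hb hab' hab
        exact reflect₁ a b (ih _ _ (by positivity) (by positivity) h₁ h₂)
  obtain ⟨n, hn⟩ := pow_unbounded_of_one_lt (max (b / a) (a / b)) hμ
  have hpow : μ ^ n ≤ μ ^ (2 * n + 1) := pow_le_pow_right₀ hμ.le (by omega)
  refine bounded n a b ha hb ?_ ?_
  · rw [← div_le_iff₀ ha]
    exact ((le_max_left _ _).trans_lt hn).le.trans hpow
  · rw [← div_le_iff₀ hb]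
    exact ((le_max_right _ _).trans_lt hn).le.trans hpow

lemma mem_stabilizer_of_mul_self_eq_one {G α : Type*} [Group G] [MulAction G α] {g : G}
    {s : Set α} (hg : g * g = 1) (hs : ∀ x ∈ s, g • x ∈ s) : g ∈ stabilizer G s :=
  mem_stabilizer_set.2 fun x => ⟨fun h => by simpa [smul_smul, hg] using hs _ h, hs x⟩

def reflFst (k : ℝ) : GL (Fin 2) ℝ :=
  ⟨!![1, k; 0, -1], !![1, k; 0, -1], by simp [one_fin_two], by simp [one_fin_two]⟩

def reflSnd (k : ℝ) : GL (Fin 2) ℝ :=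
  ⟨!![-1, 0; k, 1], !![-1, 0; k, 1], by simp [one_fin_two], by simp [one_fin_two]⟩

lemma reflFst_mul_self (k : ℝ) : reflFst k * reflFst k = 1 := Units.ext (reflFst k).val_inv

lemma reflSnd_mul_self (k : ℝ) : reflSnd k * reflSnd k = 1 := Units.ext (reflSnd k).val_inv

lemma reflFst_smul (k x y : ℝ) : reflFst k • ![x, y] = ![x + k * y, -y] := by
  rw [Units.smul_def, smul_eq_mulVec, mulVec_fin_two]
  simp [reflFst]

lemma reflSnd_smul (k x y : ℝ) : reflSnd k • ![x, y] = ![-x, k * x + y] := by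
  rw [Units.smul_def, smul_eq_mulVec, mulVec_fin_two]
  simp [reflSnd]

def coneVec (μ a b : ℝ) : Fin 2 → ℝ := a • ![μ, -1] + b • ![-1, μ]

lemma coneVec_eq (μ a b : ℝ) : coneVec μ a b = ![μ * a - b, μ * b - a] := by
  rw [coneVec, smul_vec2, smul_vec2, vec2_add]
  exact vec2_eq (by ring) (by ring)

def quadrant : Set (Fin 2 → ℝ) := {v | 0 ≤ v 0 ∧ 0 ≤ v 1}

def posCone (μ : ℝ) : Set (Fin 2 → ℝ) :=
  {0} ∪ {v | ∃ a b : ℝ, 0 < a ∧ 0 < b ∧ v = coneVec μ a b}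

lemma coneVec_mem_quadrant_iff {μ a b : ℝ} :
    coneVec μ a b ∈ quadrant ↔ b ≤ μ * a ∧ a ≤ μ * b := by
  simp [quadrant, coneVec_eq, sub_nonneg]

lemma quadrant_subset_posCone {μ : ℝ} (hμ : 1 < μ) : quadrant ⊆ posCone μ := by
  intro v hv
  obtain ⟨x, y, rfl⟩ : ∃ x y, v = ![x, y] := ⟨v 0, v 1, by ext i; fin_cases i <;> rfl⟩
  obtain ⟨hx, hy⟩ : 0 ≤ x ∧ 0 ≤ y := hv
  rcases (add_nonneg hx hy).eq_or_lt with hxy | hxy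
  · obtain ⟨rfl, rfl⟩ : x = 0 ∧ y = 0 := ⟨by linarith, by linarith⟩
    exact Or.inl (by simp)
  have hd : 0 < μ ^ 2 - 1 := by nlinarith
  -- the coordinates come from inverting `[[μ, -1], [-1, μ]]`
  refine Or.inr ⟨(μ * x + y) / (μ ^ 2 - 1), (x + μ * y) / (μ ^ 2 - 1),
    div_pos (by nlinarith) hd, div_pos (by nlinarith) hd, ?_⟩
  rw [coneVec_eq]
  exact vec2_eq (by field_simp; ring) (by field_simp; ring)

lemma reflFst_smul_coneVec {μ : ℝ} (hμ : μ ≠ 0) (a b : ℝ) :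
    reflFst (μ + μ⁻¹) • coneVec μ a b = coneVec μ (μ * b) (μ⁻¹ * a) := by
  rw [coneVec_eq, reflFst_smul, coneVec_eq]
  exact vec2_eq (by field_simp; ring) (by field_simp; ring)

lemma reflSnd_smul_coneVec {μ : ℝ} (hμ : μ ≠ 0) (a b : ℝ) :
    reflSnd (μ + μ⁻¹) • coneVec μ a b = coneVec μ (μ⁻¹ * b) (μ * a) := by
  rw [coneVec_eq, reflSnd_smul, coneVec_eq]
  exact vec2_eq (by field_simp; ring) (by field_simp; ring)

lemma reflFst_mem_stabilizer_posCone {μ : ℝ} (hμ : 1 < μ) :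
    reflFst (μ + μ⁻¹) ∈ stabilizer (GL (Fin 2) ℝ) (posCone μ) := by
  refine mem_stabilizer_of_mul_self_eq_one (reflFst_mul_self _) ?_
  rintro v (rfl | ⟨a, b, ha, hb, rfl⟩)
  · exact Or.inl (smul_zero _)
  · rw [reflFst_smul_coneVec (by positivity)]
    exact Or.inr ⟨_, _, by positivity, by positivity, rfl⟩

lemma reflSnd_mem_stabilizer_posCone {μ : ℝ} (hμ : 1 < μ) :
    reflSnd (μ + μ⁻¹) ∈ stabilizer (GL (Fin 2) ℝ) (posCone μ) := by
  refine mem_stabilizer_of_mul_self_eq_one (reflSnd_mul_self _) ?_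
  rintro v (rfl | ⟨a, b, ha, hb, rfl⟩)
  · exact Or.inl (smul_zero _)
  · rw [reflSnd_smul_coneVec (by positivity)]
    exact Or.inr ⟨_, _, by positivity, by positivity, rfl⟩

theorem biUnion_smul_quadrant {μ : ℝ} (hμ : 1 < μ) :
    ⋃ g ∈ Subgroup.closure {reflFst (μ + μ⁻¹), reflSnd (μ + μ⁻¹)}, g • quadrant
      = posCone μ := by
  have hμ₀ : μ ≠ 0 := (one_pos.trans hμ).ne'
  set H := Subgroup.closure {reflFst (μ + μ⁻¹), reflSnd (μ + μ⁻¹)}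
  apply subset_antisymm
  · refine Set.iUnion₂_subset fun g hg => ?_
    have hgM : g • posCone μ = posCone μ := (Subgroup.closure_le _).2 (Set.pair_subset
      (reflFst_mem_stabilizer_posCone hμ) (reflSnd_mem_stabilizer_posCone hμ)) hg
    exact hgM ▸ Set.smul_set_mono (quadrant_subset_posCone hμ)
  rintro v (rfl | ⟨a, b, ha, hb, rfl⟩)
  · exact Set.mem_biUnion H.one_mem ⟨0, ⟨le_rfl, le_rfl⟩, smul_zero _⟩
  obtain ⟨g, hg, hv⟩ : ∃ g ∈ H, coneVec μ a b ∈ g • quadrant := by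
    refine pos_pair_induction (P := fun a b => ∃ g ∈ H, coneVec μ a b ∈ g • quadrant) hμ
      (fun a b _ _ hba hab => ?_) (fun a b => ?_) (fun a b => ?_) ha hb
    · exact ⟨1, H.one_mem, by simpa using coneVec_mem_quadrant_iff.2 ⟨hba, hab⟩⟩
    · rintro ⟨g, hg, hv⟩
      refine ⟨_, H.mul_mem (Subgroup.subset_closure (Set.mem_insert _ _)) hg, ?_⟩
      rw [mul_smul, ← mul_inv_cancel_left₀ hμ₀ a, ← inv_mul_cancel_left₀ hμ₀ b,
        ← reflFst_smul_coneVec hμ₀]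
      exact Set.smul_mem_smul_set hv
    · rintro ⟨g, hg, hv⟩
      refine ⟨_, H.mul_mem (Subgroup.subset_closure (Set.mem_insert_of_mem _ rfl)) hg, ?_⟩
      rw [mul_smul, ← inv_mul_cancel_left₀ hμ₀ a, ← mul_inv_cancel_left₀ hμ₀ b,
        ← reflSnd_smul_coneVec hμ₀]
      exact Set.smul_mem_smul_set hv
  exact Set.mem_biUnion hg hv

end NefConeOrbit

open NefConeOrbit in
/-- The union, over all `g` in the subgroup of `GL(2,ℤ)` generated by `T₁` and `T₂`,
of the images `g(A)` of the first quadrant `A` under the linear action on `ℝ²`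
equals the open cone `M` spanned by `(3+2√2, -1)` and `(-1, 3+2√2)` together with `0`. -/
theorem orbit_of_nef_cone_eq :
    (⋃ g ∈ Subgroup.closure {T₁, T₂},
        (fun v : Fin 2 → ℝ =>
          ((g : Matrix (Fin 2) (Fin 2) ℤ).map (Int.cast : ℤ → ℝ)).mulVec v) ''
          {v : Fin 2 → ℝ | 0 ≤ v 0 ∧ 0 ≤ v 1})
      = {0} ∪ {v : Fin 2 → ℝ | ∃ a b : ℝ, 0 < a ∧ 0 < b ∧
          v = a • ![3 + 2 * Real.sqrt 2, -1] + b • ![-1, 3 + 2 * Real.sqrt 2]} := by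
  set μ := 3 + 2 * Real.sqrt 2
  have hμ : 1 < μ := by linarith [Real.sqrt_nonneg 2]
  have hk : ((6 : ℤ) : ℝ) = μ + μ⁻¹ := by
    have h2 : √2 ^ 2 = 2 := Real.sq_sqrt zero_le_two
    rw [inv_eq_of_mul_eq_one_right (b := 3 - 2 * √2) (by linear_combination -4 * h2)]
    push_cast
    ring
  let ρ := GeneralLinearGroup.map (n := Fin 2) (Int.castRingHom ℝ)
  have hT₁ : ρ T₁ = reflFst (μ + μ⁻¹) := by
    rw [← hk]; ext i j; fin_cases i <;> fin_cases j <;> simp [ρ, T₁, reflFst]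
  have hT₂ : ρ T₂ = reflSnd (μ + μ⁻¹) := by
    rw [← hk]; ext i j; fin_cases i <;> fin_cases j <;> simp [ρ, T₂, reflSnd]
  change ⋃ g ∈ Subgroup.closure {T₁, T₂}, ρ g • quadrant = posCone μ
  calc _ = ⋃ g ∈ (Subgroup.closure {T₁, T₂}).map ρ, g • quadrant := by
        simp only [Subgroup.mem_map, Set.iUnion_exists, Set.biUnion_and',
          Set.iUnion_iUnion_eq_right]
    _ = posCone μ := by
      rw [MonoidHom.map_closure, Set.image_pair, hT₁, hT₂, biUnion_smul_quadrant hμ]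
end

section
/- Let B be the symmetric bilinear form on ℤ⁶ whose Gram matrix in the basis e₁, f₁, e₂, f₂, e₃, f₃ consists of three orthogonal hyperbolic blocks, i.e., B(e_i, f_i) = 1, B(e_i, e_i) = B(f_i, f_i) = 0 for i = 1, 2, 3, and B vanishes between distinct blocks. Set v₁ = 2e₁ + e₂ + 2f₂ and v₂ = 4f₁ + e₃ + 2f₃. Then B(v₁, v₁) = 4, B(v₂, v₂) = 4, B(v₁, v₂) = 8, and the ℤ-submodule L spanned by v₁ and v₂ is primitive in ℤ⁶: for every w ∈ ℤ⁶ and every nonzero integer n with n·w ∈ L, one has w ∈ L. -/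
/-- Let `B` be the symmetric bilinear form on `ℤ⁶` whose Gram matrix in the standard basis
`e₁, f₁, e₂, f₂, e₃, f₃` consists of three orthogonal hyperbolic blocks.  Set
`v₁ = 2e₁ + e₂ + 2f₂` and `v₂ = 4f₁ + e₃ + 2f₃`.  Then `B(v₁,v₁) = 4`, `B(v₂,v₂) = 4`,
`B(v₁,v₂) = 8`, and the submodule spanned by `v₁, v₂` is primitive in `ℤ⁶`. -/
theorem primitive_embedding_in_hyperbolic_sum
    (B : (Fin 6 → ℤ) →ₗ[ℤ] (Fin 6 → ℤ) →ₗ[ℤ] ℤ)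
    (hB : ∀ i j : Fin 6, B (Pi.single i 1) (Pi.single j 1) =
      !![0, 1, 0, 0, 0, 0;
         1, 0, 0, 0, 0, 0;
         0, 0, 0, 1, 0, 0;
         0, 0, 1, 0, 0, 0;
         0, 0, 0, 0, 0, 1;
         0, 0, 0, 0, 1, 0] i j) :
    B ![2, 0, 1, 2, 0, 0] ![2, 0, 1, 2, 0, 0] = 4 ∧
    B ![0, 4, 0, 0, 1, 2] ![0, 4, 0, 0, 1, 2] = 4 ∧
    B ![2, 0, 1, 2, 0, 0] ![0, 4, 0, 0, 1, 2] = 8 ∧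
    ∀ (w : Fin 6 → ℤ) (n : ℤ), n ≠ 0 →
      n • w ∈ Submodule.span ℤ {![2, 0, 1, 2, 0, 0], ![0, 4, 0, 0, 1, 2]} →
      w ∈ Submodule.span ℤ {![2, 0, 1, 2, 0, 0], ![0, 4, 0, 0, 1, 2]} := by
  have expand : ∀ x y : Fin 6 → ℤ, B x y =
      ∑ i : Fin 6, ∑ j : Fin 6, x i * y j *
        (!![0, 1, 0, 0, 0, 0;
           1, 0, 0, 0, 0, 0;
           0, 0, 0, 1, 0, 0;
           0, 0, 1, 0, 0, 0;
           0, 0, 0, 0, 0, 1;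
           0, 0, 0, 0, 1, 0] i j) := by
    intro x y
    have hx : x = ∑ i : Fin 6, x i • Pi.single i (1 : ℤ) := by
      simp [← Pi.single_smul, Finset.univ_sum_single]
    have hy : y = ∑ j : Fin 6, y j • Pi.single j (1 : ℤ) := by
      simp [← Pi.single_smul, Finset.univ_sum_single]
    conv_lhs => rw [hx, hy]
    simp only [map_sum, map_smul, LinearMap.sum_apply, LinearMap.smul_apply, smul_eq_mul, hB,
      Finset.mul_sum]
    rw [Finset.sum_comm]
    refine Finset.sum_congr rfl fun i _ => Finset.sum_congr rfl fun j _ => by ring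
  refine ⟨?_, ?_, ?_, ?_⟩
  · rw [expand]; decide
  · rw [expand]; decide
  · rw [expand]; decide
  · intro w n hn hmem
    rw [Submodule.mem_span_pair] at hmem ⊢
    obtain ⟨a, b, hab⟩ := hmem
    have h2 : n * w 2 = a := by
      have := congrFun hab 2
      simpa using this.symm
    have h4 : n * w 4 = b := by
      have := congrFun hab 4
      simpa using this.symm
    refine ⟨w 2, w 4, ?_⟩
    have key : n • (w 2 • ![2, 0, 1, 2, 0, 0] + w 4 • ![0, 4, 0, 0, 1, 2] : Fin 6 → ℤ) = n • w := by
      rw [← hab, ← h2, ← h4]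
      simp [smul_add, mul_smul]
    exact smul_right_injective (Fin 6 → ℤ) hn key
end
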